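/- Let K be an algebraically closed field, T ≤ SL₂(K) the subgroup of diagonal matrices, and let S ⊆ SL₂(K) be the set S = {[[1, α],[1, 1+α]] : α ∈ K} ∪ {[[0,1],[−1,1]], [[0,1],[−1,0]], [[1,1],[0,1]], [[1,0],[0,1]]}. Then for every A ∈ SL₂(K) there is exactly one h ∈ S such that A = t₁ h t₂ for some t₁, t₂ ∈ T. (Thus S is a minimal set of representatives of the double cosets T\SL₂(K)/T.) -/

import Mathlib

/-!
Multiplying `A = [[a, b], [c, d]]` by `diag(u, u⁻¹)` on the left and `diag(v, v⁻¹)` on the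
right scales its entries to `[[uv a, uv⁻¹ b], [u⁻¹v c, u⁻¹v⁻¹ d]]`. Hence the pattern of
vanishing entries and the product `bc` are invariants of the double coset `TAT`, and these
invariants already separate the elements of `S`. Conversely, once the zero pattern of `A` singles
out its candidate representative, solving for `u` and `v` only requires a square root (of `b/d`,
`ab` or `ac`), which exists because `K` is algebraically closed; in the generic case `a, c ≠ 0`
the representative is `g_{bc}`.
-/

open Matrix

/-- The diagonal torus `T ≤ SL₂(K)`. -/
def Tdiag (K : Type*) [Field K] : Set (SpecialLinearGroup (Fin 2) K) :=
  {t | (t : Matrix (Fin 2) (Fin 2) K) 0 1 = 0 ∧ (t : Matrix (Fin 2) (Fin 2) K) 1 0 = 0}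

/-- `g_α = [[1, α],[1, 1+α]] ∈ SL₂(K)`. -/
def gMat {K : Type*} [Field K] (α : K) : SpecialLinearGroup (Fin 2) K :=
  ⟨!![1, α; 1, 1 + α], by rw [Matrix.det_fin_two_of]; ring⟩

/-- `[[0,1],[-1,1]] ∈ SL₂(K)`. -/
def wOne (K : Type*) [Field K] : SpecialLinearGroup (Fin 2) K :=
  ⟨!![0, 1; -1, 1], by rw [Matrix.det_fin_two_of]; ring⟩

/-- `[[0,1],[-1,0]] ∈ SL₂(K)`. -/
def wElt (K : Type*) [Field K] : SpecialLinearGroup (Fin 2) K :=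
  ⟨!![0, 1; -1, 0], by rw [Matrix.det_fin_two_of]; ring⟩

/-- `[[1,1],[0,1]] ∈ SL₂(K)`. -/
def uOne (K : Type*) [Field K] : SpecialLinearGroup (Fin 2) K :=
  ⟨!![1, 1; 0, 1], by rw [Matrix.det_fin_two_of]; ring⟩


open scoped MatrixGroups
open DoubleCoset

namespace Tdiag

variable {K : Type*} [Field K]

local notation:1024 "↑ₘ" A:1024 => ((A : SL(2, K)) : Matrix (Fin 2) (Fin 2) K)

lemma det_entries (A : SL(2, K)) : ↑ₘA 0 0 * ↑ₘA 1 1 - ↑ₘA 0 1 * ↑ₘA 1 0 = 1 := by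
  rw [← det_fin_two, A.det_coe]

def diagSL (u : Kˣ) : SL(2, K) :=
  ⟨!![(u : K), 0; 0, ↑u⁻¹], by simp [det_fin_two_of]⟩

lemma coe_diagSL (u : Kˣ) : ↑ₘ(diagSL u) = !![(u : K), 0; 0, ↑u⁻¹] := rfl

lemma diagSL_mem (u : Kˣ) : diagSL u ∈ Tdiag K := by
  simp [Tdiag, coe_diagSL]

lemma exists_eq_diagSL {t : SL(2, K)} (ht : t ∈ Tdiag K) : ∃ u : Kˣ, t = diagSL u := by
  have hdet : ↑ₘt 0 0 * ↑ₘt 1 1 = 1 := by simpa [ht.1] using det_entries t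
  refine ⟨Units.mkOfMulEqOne _ _ hdet, Subtype.ext ?_⟩
  ext i j
  fin_cases i <;> fin_cases j <;> simp [coe_diagSL, ht.1, ht.2, eq_inv_of_mul_eq_one_right hdet]

lemma coe_diagSL_mul_mul (u v : Kˣ) (h : SL(2, K)) :
    ↑ₘ(diagSL u * h * diagSL v) =
      !![u * v * ↑ₘh 0 0, u * ↑v⁻¹ * ↑ₘh 0 1; ↑u⁻¹ * v * ↑ₘh 1 0, ↑u⁻¹ * ↑v⁻¹ * ↑ₘh 1 1] := by
  simp only [Matrix.SpecialLinearGroup.coe_mul, coe_diagSL]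
  rw [eta_fin_two ↑ₘh, mul_fin_two, mul_fin_two]
  ext i j
  fin_cases i <;> fin_cases j <;> simp <;> ring

lemma mem_doubleCoset_iff {A h : SL(2, K)} :
    A ∈ doubleCoset h (Tdiag K) (Tdiag K) ↔ ∃ u v : Kˣ, A = diagSL u * h * diagSL v := by
  rw [mem_doubleCoset]
  constructor
  · rintro ⟨t₁, ht₁, t₂, ht₂, rfl⟩
    obtain ⟨u, rfl⟩ := exists_eq_diagSL ht₁
    obtain ⟨v, rfl⟩ := exists_eq_diagSL ht₂
    exact ⟨u, v, rfl⟩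
  · rintro ⟨u, v, rfl⟩
    exact ⟨_, diagSL_mem u, _, diagSL_mem v, rfl⟩

lemma eq_diagSL_mul_mul {A h : SL(2, K)} {u v : Kˣ}
    (h00 : ↑ₘA 0 0 = u * v * ↑ₘh 0 0) (h01 : ↑ₘA 0 1 = u * ↑v⁻¹ * ↑ₘh 0 1)
    (h10 : ↑ₘA 1 0 = ↑u⁻¹ * v * ↑ₘh 1 0) (h11 : ↑ₘA 1 1 = ↑u⁻¹ * ↑v⁻¹ * ↑ₘh 1 1) :
    A = diagSL u * h * diagSL v := by
  refine Subtype.ext ?_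
  rw [coe_diagSL_mul_mul, eta_fin_two ↑ₘA, h00, h01, h10, h11]

def torusInvariant (A : SL(2, K)) : (Fin 2 → Fin 2 → Prop) × K :=
  (fun i j => ↑ₘA i j = 0, ↑ₘA 0 1 * ↑ₘA 1 0)

lemma torusInvariant_diagSL_mul_mul (u v : Kˣ) (h : SL(2, K)) :
    torusInvariant (diagSL u * h * diagSL v) = torusInvariant h := by
  simp only [torusInvariant, coe_diagSL_mul_mul, Prod.mk.injEq]
  refine ⟨?_, ?_⟩
  · ext i j
    fin_cases i <;> fin_cases j <;> simp
  · simp only [of_apply, cons_val', cons_val_zero, cons_val_one, empty_val', cons_val_fin_one,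
      Units.val_inv_eq_inv_val]
    field_simp

lemma torusInvariant_of_mem_doubleCoset {A h : SL(2, K)}
    (hA : A ∈ doubleCoset h (Tdiag K) (Tdiag K)) : torusInvariant A = torusInvariant h := by
  obtain ⟨u, v, rfl⟩ := mem_doubleCoset_iff.1 hA
  exact torusInvariant_diagSL_mul_mul u v h

lemma coe_gMat (α : K) : ↑ₘ(gMat α) = !![1, α; 1, 1 + α] := rfl
lemma coe_wOne : ↑ₘ(wOne K) = !![0, 1; -1, 1] := rfl
lemma coe_wElt : ↑ₘ(wElt K) = !![0, 1; -1, 0] := rfl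
lemma coe_uOne : ↑ₘ(uOne K) = !![1, 1; 0, 1] := rfl

variable (K) in
def doubleCosetReps : Set SL(2, K) :=
  {g | ∃ α : K, g = gMat α} ∪ {wOne K, wElt K, uOne K, 1}

lemma torusInvariant_injOn : Set.InjOn torusInvariant (doubleCosetReps K) := by
  intro g hg g' hg' heq
  have hzero (i j : Fin 2) : ↑ₘg i j = 0 ↔ ↑ₘg' i j = 0 :=
    (congrFun (congrFun (congrArg Prod.fst heq) i) j).to_iff
  have hprod : ↑ₘg 0 1 * ↑ₘg 1 0 = ↑ₘg' 0 1 * ↑ₘg' 1 0 := congrArg Prod.snd heq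
  have h00 := hzero 0 0
  have h01 := hzero 0 1
  have h10 := hzero 1 0
  have h11 := hzero 1 1
  clear hzero heq
  rcases hg with ⟨α, rfl⟩ | rfl | rfl | rfl | rfl <;>
    rcases hg' with ⟨β, rfl⟩ | rfl | rfl | rfl | rfl <;>
    simp [coe_gMat, coe_wOne, coe_wElt, coe_uOne] at h00 h01 h10 h11 hprod ⊢
  exact congrArg gMat hprod

lemma exists_unit_mul_self [IsAlgClosed K] (x : Kˣ) : ∃ z : Kˣ, (x : K) = z * z := by
  obtain ⟨z, hz⟩ := IsAlgClosed.exists_eq_mul_self (x : K)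
  refine ⟨Units.mk0 z ?_, hz⟩
  rintro rfl
  simp at hz

lemma offDiag_mul_eq_neg_one {A : SL(2, K)} (h00 : ↑ₘA 0 0 = 0) : ↑ₘA 0 1 * ↑ₘA 1 0 = -1 := by
  linear_combination -det_entries A + ↑ₘA 1 1 * h00

lemma exists_eq_diagSL_mul_wElt_mul {A : SL(2, K)} (h00 : ↑ₘA 0 0 = 0) (h11 : ↑ₘA 1 1 = 0) :
    ∃ u v : Kˣ, A = diagSL u * wElt K * diagSL v := by
  have hbc := offDiag_mul_eq_neg_one h00
  have hb : ↑ₘA 0 1 ≠ 0 := left_ne_zero_of_mul (by rw [hbc]; exact neg_ne_zero.2 one_ne_zero)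
  refine ⟨Units.mk0 _ hb, 1, eq_diagSL_mul_mul ?_ ?_ ?_ ?_⟩ <;> simp [coe_wElt, h00, h11]
  field_simp
  linear_combination hbc

lemma exists_eq_diagSL_mul_wOne_mul [IsAlgClosed K] {A : SL(2, K)} (h00 : ↑ₘA 0 0 = 0)
    (h11 : ↑ₘA 1 1 ≠ 0) : ∃ u v : Kˣ, A = diagSL u * wOne K * diagSL v := by
  have hbc := offDiag_mul_eq_neg_one h00
  have hb : ↑ₘA 0 1 ≠ 0 := left_ne_zero_of_mul (by rw [hbc]; exact neg_ne_zero.2 one_ne_zero)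
  obtain ⟨z, hz⟩ := exists_unit_mul_self (Units.mk0 _ hb / Units.mk0 _ h11)
  refine ⟨z, (z * Units.mk0 _ h11)⁻¹, eq_diagSL_mul_mul ?_ ?_ ?_ ?_⟩ <;>
    simp [coe_wOne, h00] at hz ⊢ <;> rw [div_eq_iff h11] at hz
  · linear_combination hz
  · field_simp
    linear_combination -↑ₘA 1 0 * hz + hbc

lemma exists_eq_diagSL_mul_uOne_mul [IsAlgClosed K] {A : SL(2, K)} (h00 : ↑ₘA 0 0 ≠ 0)
    (h01 : ↑ₘA 0 1 ≠ 0) (h10 : ↑ₘA 1 0 = 0) : ∃ u v : Kˣ, A = diagSL u * uOne K * diagSL v := by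
  have had : ↑ₘA 0 0 * ↑ₘA 1 1 = 1 := by linear_combination det_entries A + ↑ₘA 0 1 * h10
  obtain ⟨z, hz⟩ := exists_unit_mul_self (Units.mk0 _ h00 * Units.mk0 _ h01)
  refine ⟨z, Units.mk0 _ h00 / z, eq_diagSL_mul_mul ?_ ?_ ?_ ?_⟩ <;>
    simp [coe_uOne, h10] at hz ⊢ <;> field_simp
  · linear_combination hz
  · linear_combination had

lemma exists_eq_diagSL_mul_one_mul {A : SL(2, K)} (h01 : ↑ₘA 0 1 = 0) (h10 : ↑ₘA 1 0 = 0) :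
    ∃ u v : Kˣ, A = diagSL u * 1 * diagSL v := by
  have had : ↑ₘA 0 0 * ↑ₘA 1 1 = 1 := by linear_combination det_entries A + ↑ₘA 0 1 * h10
  refine ⟨Units.mk0 _ (left_ne_zero_of_mul_eq_one had), 1, eq_diagSL_mul_mul ?_ ?_ ?_ ?_⟩ <;>
    simp [h01, h10, eq_inv_of_mul_eq_one_right had]

lemma exists_eq_diagSL_mul_gMat_mul [IsAlgClosed K] {A : SL(2, K)} (h00 : ↑ₘA 0 0 ≠ 0)
    (h10 : ↑ₘA 1 0 ≠ 0) : ∃ u v : Kˣ, A = diagSL u * gMat (↑ₘA 0 1 * ↑ₘA 1 0) * diagSL v := by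
  obtain ⟨z, hz⟩ := exists_unit_mul_self (Units.mk0 _ h00 * Units.mk0 _ h10)
  refine ⟨Units.mk0 _ h00 / z, z, eq_diagSL_mul_mul ?_ ?_ ?_ ?_⟩ <;>
    simp [coe_gMat] at hz ⊢ <;> field_simp
  · linear_combination -↑ₘA 0 1 * hz
  · linear_combination hz
  · linear_combination det_entries A

lemma exists_mem_doubleCosetReps [IsAlgClosed K] (A : SL(2, K)) :
    ∃ h ∈ doubleCosetReps K, A ∈ doubleCoset h (Tdiag K) (Tdiag K) := by
  simp only [mem_doubleCoset_iff]
  by_cases h00 : ↑ₘA 0 0 = 0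
  · by_cases h11 : ↑ₘA 1 1 = 0
    · exact ⟨wElt K, by simp [doubleCosetReps], exists_eq_diagSL_mul_wElt_mul h00 h11⟩
    · exact ⟨wOne K, by simp [doubleCosetReps], exists_eq_diagSL_mul_wOne_mul h00 h11⟩
  by_cases h10 : ↑ₘA 1 0 = 0
  · by_cases h01 : ↑ₘA 0 1 = 0
    · exact ⟨1, by simp [doubleCosetReps], exists_eq_diagSL_mul_one_mul h01 h10⟩
    · exact ⟨uOne K, by simp [doubleCosetReps], exists_eq_diagSL_mul_uOne_mul h00 h01 h10⟩
  · exact ⟨_, Or.inl ⟨_, rfl⟩, exists_eq_diagSL_mul_gMat_mul h00 h10⟩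

end Tdiag

/-- The set `S = {g_α : α ∈ K} ∪ {[[0,1],[-1,1]], [[0,1],[-1,0]], [[1,1],[0,1]], 1}` is a
minimal set of representatives of the double cosets `T\SL₂(K)/T`. -/
theorem T_double_coset_reps {K : Type*} [Field K] [IsAlgClosed K]
    (A : SpecialLinearGroup (Fin 2) K) :
    ∃! h : SpecialLinearGroup (Fin 2) K,
      h ∈ ({g | ∃ α : K, g = gMat α} ∪ {wOne K, wElt K, uOne K, 1} :
          Set (SpecialLinearGroup (Fin 2) K)) ∧
      ∃ t₁ ∈ Tdiag K, ∃ t₂ ∈ Tdiag K, A = t₁ * h * t₂ := by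
  obtain ⟨h, hS, hA⟩ := Tdiag.exists_mem_doubleCosetReps A
  refine ⟨h, ⟨hS, mem_doubleCoset.1 hA⟩, ?_⟩
  rintro h' ⟨hS', hA'⟩
  apply Tdiag.torusInvariant_injOn hS' hS
  rw [← Tdiag.torusInvariant_of_mem_doubleCoset (mem_doubleCoset.2 hA'),
    Tdiag.torusInvariant_of_mem_doubleCoset hA]
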